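/- Let X be a Hausdorff space and B a closed subset of X. If X − B is ccc and B is not ccc, then B is not collared in X. -/

import Mathlib

open Set Topology unitInterval

variable {X : Type*} [TopologicalSpace X]

/-- `h : B × [0,1] → X` is a collar of `B` in `X`: an embedding with `h(x,0) = x`,
`h⁻¹(B) = B × {0}`, and `h(B × [0,1))` open in `X`. -/
def IsCollarMap (B : Set X) (h : B × I → X) : Prop :=
  Topology.IsEmbedding h ∧ (∀ x : B, h (x, 0) = (x : X)) ∧
    h ⁻¹' B = {p : B × I | p.2 = 0} ∧ IsOpen (h '' {p : B × I | p.2 < 1})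

/-- `B` is collared in `X`. -/
def IsCollared (B : Set X) : Prop := ∃ h : B × I → X, IsCollarMap B h

/-- `B` is strongly collared in `X`: the collar map can be chosen to be a closed map. -/
def IsStronglyCollared (B : Set X) : Prop :=
  ∃ h : B × I → X, IsCollarMap B h ∧ IsClosedMap h


/-- A topological space is ccc if every family of pairwise disjoint nonempty open subsets
is at most countable. -/
def CCCSpace (Y : Type*) [TopologicalSpace Y] : Prop :=
  ∀ 𝒮 : Set (Set Y), (∀ U ∈ 𝒮, IsOpen U ∧ U.Nonempty) → 𝒮.PairwiseDisjoint id →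
    𝒮.Countable

/-! Removing `B` from `X` leaves the open strip `h(B × (0,1))` of a collar `h`; it is a copy of
`B × (0,1)` sitting openly in `X − B`. An uncountable disjoint family of nonempty open sets
`Uᵢ` of `B` therefore yields the uncountable disjoint family `h(Uᵢ × (0,1))` of nonempty open
sets of `X − B`. -/

namespace CCCSpace

variable {α β : Type*} [TopologicalSpace α] [TopologicalSpace β]

theorem of_setMap (hβ : CCCSpace β) (F : Set α → Set β)
    (hF : ∀ U, IsOpen U → U.Nonempty → IsOpen (F U) ∧ (F U).Nonempty)
    (hF_disj : ∀ U V, Disjoint U V → Disjoint (F U) (F V)) : CCCSpace α := by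
  intro 𝒮 h𝒮 h𝒮_disj
  have hinj : InjOn F 𝒮 := by
    intro U hU V hV hUV
    by_contra hne
    obtain ⟨y, hy⟩ := (hF U (h𝒮 U hU).1 (h𝒮 U hU).2).2
    exact Set.disjoint_left.mp (hF_disj U V (h𝒮_disj hU hV hne)) hy (hUV ▸ hy)
  refine countable_of_injective_of_countable_image hinj (hβ _ ?_ ?_)
  · rintro _ ⟨U, hU, rfl⟩
    exact hF U (h𝒮 U hU).1 (h𝒮 U hU).2
  · rintro _ ⟨U, hU, rfl⟩ _ ⟨V, hV, rfl⟩ hne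
    exact hF_disj U V (h𝒮_disj hU hV fun h ↦ hne (congrArg F h))

theorem of_injective_isOpenMap (hβ : CCCSpace β) {f : α → β} (hinj : Function.Injective f)
    (hf : IsOpenMap f) : CCCSpace α :=
  hβ.of_setMap (f '' ·) (fun _ hU hne ↦ ⟨hf _ hU, hne.image f⟩)
    fun _ _ hUV ↦ (disjoint_image_iff hinj).mpr hUV

theorem of_prod_left [Nonempty β] (h : CCCSpace (α × β)) : CCCSpace α :=
  h.of_setMap (· ×ˢ univ) (fun _ hU hne ↦ ⟨hU.prod isOpen_univ, hne.prod univ_nonempty⟩)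
    fun _ _ hUV ↦ hUV.set_prod_left _ _

end CCCSpace

theorem Topology.IsEmbedding.isOpen_image_of_subset {α β : Type*} [TopologicalSpace α]
    [TopologicalSpace β] {f : α → β} (hf : IsEmbedding f) {s t : Set α} (hs : IsOpen s)
    (hst : s ⊆ t) (ht : IsOpen (f '' t)) : IsOpen (f '' s) := by
  obtain ⟨W, hW, rfl⟩ := hf.isInducing.isOpen_iff.mp hs
  rw [← inter_eq_right.mpr hst, image_inter_preimage]
  exact ht.inter hW

namespace IsCollarMap

variable {B : Set X} {h : B × I → X}

theorem apply_notMem (hh : IsCollarMap B h) {p : B × I} (hp : p.2 ≠ 0) : h p ∉ B :=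
  fun hpB ↦ hp (hh.2.2.1 ▸ hpB : p ∈ {p : B × I | p.2 = 0})

theorem exists_injective_isOpenMap (hh : IsCollarMap B h) :
    ∃ f : B × Ioo (0 : I) 1 → ↥Bᶜ, Function.Injective f ∧ IsOpenMap f := by
  set g : B × Ioo (0 : I) 1 → B × I := Prod.map id Subtype.val
  have hg : IsOpenEmbedding g :=
    IsOpenEmbedding.id.prodMap isOpen_Ioo.isOpenEmbedding_subtypeVal
  refine ⟨codRestrict (h ∘ g) Bᶜ fun p ↦ hh.apply_notMem p.2.2.1.ne', ?_, ?_⟩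
  · exact (hh.1.injective.comp hg.injective).codRestrict _
  · refine IsOpenMap.codRestrict (fun V hV ↦ ?_) _
    rw [image_comp]
    exact hh.1.isOpen_image_of_subset (hg.isOpenMap V hV)
      (by rintro _ ⟨p, -, rfl⟩; exact p.2.2.2) hh.2.2.2

end IsCollarMap

theorem not_collared_of_ccc_compl_general {Y : Type*} [TopologicalSpace Y]
    (B : Set Y) (hccc : CCCSpace ↥(Bᶜ)) (hnccc : ¬ CCCSpace ↥B) :
    ¬ IsCollared B := by
  rintro ⟨h, hh⟩
  obtain ⟨f, hinj, hf⟩ := hh.exists_injective_isOpenMap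
  have : Nonempty (Ioo (0 : I) 1) := (nonempty_Ioo.mpr zero_lt_one).to_subtype
  exact hnccc (hccc.of_injective_isOpenMap hinj hf).of_prod_left

/-- If `B` is a closed subset of a Hausdorff space `X` such that `X − B` is ccc and `B` is
not ccc, then `B` is not collared in `X`. -/
theorem not_collared_of_ccc_compl {Y : Type*} [TopologicalSpace Y] [T2Space Y]
    (B : Set Y) (hB : IsClosed B) (hccc : CCCSpace ↥(Bᶜ)) (hnccc : ¬ CCCSpace ↥B) :
    ¬ IsCollared B :=
  not_collared_of_ccc_compl_general B hccc hnccc
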